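/- If λ ≠ +∞ is an eigenvalue of the min-plus matrix A ∈ ℝ_min^{n×n} (i.e., there exists a vector x, not all entries +∞, with A ⊗ x = λ ⊗ x), then there exists a circuit i_0 → i_1 → ⋯ → i_s = i_0 in the directed graph with edges (i,j) whenever a_{ij} ≠ +∞, whose average weight (a_{i_0 i_1} + ⋯ + a_{i_{s-1} i_s})/s equals λ. -/
import Mathlib


open Finset

/-- `w` is the average weight of some circuit (a closed path with pairwise
distinct intermediate vertices) in the network of the min-plus matrix `A`. -/
def IsCircuitAvg {n : ℕ} (A : Matrix (Fin n) (Fin n) (WithTop ℝ)) (w : ℝ) : Prop :=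
  ∃ (s : ℕ) (f : ℕ → Fin n), 0 < s ∧ f s = f 0 ∧
    (∀ k l, k < s → l < s → f k = f l → k = l) ∧
    ∑ k ∈ range s, A (f k) (f (k + 1)) = (((s : ℝ) * w : ℝ) : WithTop ℝ)

/-- If `λ ≠ +∞` is a min-plus eigenvalue of `A` (there is a vector `x`, not all
of whose entries are `+∞`, with `A ⊗ x = λ ⊗ x`), then the network of `A`
contains a circuit whose average weight equals `λ`. -/
theorem minplus_eigenvalue_is_circuit_avg {n : ℕ}
    (A : Matrix (Fin n) (Fin n) (WithTop ℝ)) (lam : ℝ)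
    (x : Fin n → WithTop ℝ) (hx : ∃ i, x i ≠ ⊤)
    (heig : ∀ i, Finset.univ.inf (fun j => A i j + x j) = (lam : WithTop ℝ) + x i) :
    IsCircuitAvg A lam := by
  classical
  obtain ⟨i0, hi0⟩ := hx
  haveI : Nonempty (Fin n) := ⟨i0⟩
  have key : ∀ i : Fin n, x i ≠ ⊤ →
      ∃ j : Fin n, A i j + x j = (lam : WithTop ℝ) + x i ∧ x j ≠ ⊤ := by
    intro i hi
    obtain ⟨j, -, hj⟩ := Finset.exists_mem_eq_inf (univ : Finset (Fin n))
      univ_nonempty (fun j => A i j + x j)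
    have hj' : A i j + x j = (lam : WithTop ℝ) + x i := by rw [← hj, heig]
    refine ⟨j, hj', ?_⟩
    have hne : A i j + x j ≠ ⊤ := by
      rw [hj']
      exact WithTop.add_ne_top.2 ⟨WithTop.coe_ne_top, hi⟩
    exact (WithTop.add_ne_top.1 hne).2
  set S := {i : Fin n // x i ≠ ⊤} with hS
  let g : S → S := fun i => ⟨(key i.1 i.2).choose, ((key i.1 i.2).choose_spec).2⟩
  have hg : ∀ i : S, A i.1 (g i).1 + x (g i).1 = (lam : WithTop ℝ) + x i.1 :=
    fun i => ((key i.1 i.2).choose_spec).1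
  let f : ℕ → S := fun k => g^[k] ⟨i0, hi0⟩
  have hf : ∀ k, f (k + 1) = g (f k) := fun k => Function.iterate_succ_apply' g k _
  have hstep : ∀ k, A (f k).1 (f (k + 1)).1 + x (f (k + 1)).1
      = (lam : WithTop ℝ) + x (f k).1 := by
    intro k; rw [hf k]; exact hg (f k)
  -- pigeonhole : some repetition occurs
  have hpig : ∃ b, ∃ a, a < b ∧ f a = f b := by
    obtain ⟨a, b, hab, heq⟩ :=
      Fintype.exists_ne_map_eq_of_card_lt (fun k : Fin (n + 1) => (f k.1).1)
        (by simp)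
    have heq' : f a.1 = f b.1 := Subtype.ext heq
    rcases lt_or_gt_of_ne (fun h : a.1 = b.1 => hab (Fin.ext h)) with h | h
    · exact ⟨b.1, a.1, h, heq'⟩
    · exact ⟨a.1, b.1, h, heq'.symm⟩
  let P : ℕ → Prop := fun b => ∃ a, a < b ∧ f a = f b
  have hPex : ∃ b, P b := hpig
  let b0 := Nat.find hPex
  obtain ⟨a0, ha0, hfeq⟩ : P b0 := Nat.find_spec hPex
  have hinj : ∀ k l, k < l → l < b0 → f k ≠ f l := by
    intro k l hkl hl heq
    exact Nat.find_min hPex hl ⟨k, hkl, heq⟩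
  set s := b0 - a0 with hs
  have hspos : 0 < s := Nat.sub_pos_of_lt ha0
  let F : ℕ → S := fun k => f (a0 + k)
  have hF0 : F s = F 0 := by
    show f (a0 + (b0 - a0)) = f (a0 + 0)
    rw [Nat.add_sub_cancel' ha0.le, Nat.add_zero]
    exact hfeq.symm
  have hFdist : ∀ k l, k < s → l < s → (F k).1 = (F l).1 → k = l := by
    intro k l hk hl heq
    by_contra hne
    have heq' : F k = F l := Subtype.ext heq
    rcases lt_or_gt_of_ne hne with h | h
    · exact hinj (a0 + k) (a0 + l) (by omega) (by omega) heq'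
    · exact hinj (a0 + l) (a0 + k) (by omega) (by omega) heq'.symm
  let u : ℕ → WithTop ℝ := fun k => x (F k).1
  have hu : ∀ k, u k ≠ ⊤ := fun k => (F k).2
  have hsum : ∑ k ∈ range s, (A (F k).1 (F (k + 1)).1 + u (k + 1))
      = ∑ k ∈ range s, ((lam : WithTop ℝ) + u k) := by
    refine Finset.sum_congr rfl fun k _ => ?_
    show A (f (a0 + k)).1 (f (a0 + (k + 1))).1 + x (f (a0 + (k + 1))).1
      = (lam : WithTop ℝ) + x (f (a0 + k)).1
    rw [show a0 + (k + 1) = (a0 + k) + 1 by ring]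
    exact hstep (a0 + k)
  rw [Finset.sum_add_distrib, Finset.sum_add_distrib, Finset.sum_const,
    Finset.card_range] at hsum
  -- shift the telescoping sum
  have hshift : ∑ k ∈ range s, u (k + 1) = ∑ k ∈ range s, u k := by
    have h1 : ∑ k ∈ range (s + 1), u k = (∑ k ∈ range s, u (k + 1)) + u 0 :=
      Finset.sum_range_succ' u s
    have h2 : ∑ k ∈ range (s + 1), u k = (∑ k ∈ range s, u k) + u s :=
      Finset.sum_range_succ u s
    have hus : u s = u 0 := by show x (F s).1 = x (F 0).1; rw [hF0]
    rw [hus] at h2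
    exact WithTop.add_right_cancel (hu 0) (h1.symm.trans h2)
  rw [hshift] at hsum
  have hT : (∑ k ∈ range s, u k) ≠ ⊤ :=
    WithTop.sum_ne_top.2 fun k _ => hu k
  have hA : ∑ k ∈ range s, A (F k).1 (F (k + 1)).1 = s • (lam : WithTop ℝ) :=
    WithTop.add_right_cancel hT hsum
  refine ⟨s, fun k => (F k).1, hspos, congrArg Subtype.val hF0, hFdist, ?_⟩
  rw [hA]
  have : ((s : ℝ) * lam) = (s : ℕ) • lam := by
    rw [nsmul_eq_mul]
  rw [this]
  clear hA hT hshift hsum hu hFdist hF0 hspos hs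
  induction s with
  | zero => simp
  | succ m ih =>
    rw [succ_nsmul, succ_nsmul, WithTop.coe_add, ih]
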